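/- If A and B are real matrices then the Moore–Penrose pseudoinverse of their Kronecker product satisfies (A ⊗ B)^† = A^† ⊗ B^†. -/

import Mathlib

open Matrix Kronecker

/-- `P` is the Moore–Penrose pseudoinverse of `M`. -/
def IsMoorePenrose {m n : Type*} [Fintype m] [Fintype n]
    (M : Matrix m n ℝ) (P : Matrix n m ℝ) : Prop :=
  M * P * M = M ∧ P * M * P = P ∧ (M * P)ᵀ = M * P ∧ (P * M)ᵀ = P * M

/- Each Penrose equation is a polynomial identity in products and transposes, and `⊗ₖ` is
multiplicative and commutes with transposition, so the equations for `A, P` and `B, Q`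
combine factorwise into those for `A ⊗ₖ B, P ⊗ₖ Q`. -/

theorem IsMoorePenrose.kronecker {m₁ n₁ m₂ n₂ : Type*}
    [Fintype m₁] [Fintype n₁] [Fintype m₂] [Fintype n₂]
    {A : Matrix m₁ n₁ ℝ} {P : Matrix n₁ m₁ ℝ} {B : Matrix m₂ n₂ ℝ} {Q : Matrix n₂ m₂ ℝ}
    (hP : IsMoorePenrose A P) (hQ : IsMoorePenrose B Q) :
    IsMoorePenrose (A ⊗ₖ B) (P ⊗ₖ Q) := by
  obtain ⟨hAPA, hPAP, hAP, hPA⟩ := hP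
  obtain ⟨hBQB, hQBQ, hBQ, hQB⟩ := hQ
  refine ⟨?_, ?_, ?_, ?_⟩ <;>
    simp only [← mul_kronecker_mul, ← kroneckerMap_transpose,
      hAPA, hPAP, hAP, hPA, hBQB, hQBQ, hBQ, hQB]

theorem kronecker_pseudoinverse (m₁ n₁ m₂ n₂ : ℕ)
    (A : Matrix (Fin m₁) (Fin n₁) ℝ) (B : Matrix (Fin m₂) (Fin n₂) ℝ)
    (P : Matrix (Fin n₁) (Fin m₁) ℝ) (Q : Matrix (Fin n₂) (Fin m₂) ℝ)
    (hP : IsMoorePenrose A P) (hQ : IsMoorePenrose B Q) :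
    IsMoorePenrose (A ⊗ₖ B) (P ⊗ₖ Q) :=
  hP.kronecker hQ
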